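/- arXiv:1211.6501 — 3 statements merged into one kernel-verified Lean document; each statement's English description precedes it below -/
import Mathlib

section
/- Let μ be a Borel probability measure on ℝ^d with compact support K, and suppose C^{-1}·r^γ ≤ μ(B(x,r)) ≤ C·r^γ for all x ∈ K and 0 < r < 1 (with C ≥ 1, γ > 0). Let μ̃ be the reflection of μ, i.e. μ̃(A) = μ(-A). Then there exists c > 0 such that (μ * μ̃)(B(0,ε)) ≥ c·ε^γ for all sufficiently small ε > 0. -/
open MeasureTheory Metric

/-- If `μ` is Ahlfors regular of degree `γ` on its compact support `K`, then the
convolution of `μ` with its reflection gives mass `≳ ε^γ` to `B(0,ε)`. -/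
theorem conv_reflection_lower_bound {d : ℕ} (μ : Measure (EuclideanSpace ℝ (Fin d)))
    [IsProbabilityMeasure μ] (K : Set (EuclideanSpace ℝ (Fin d)))
    (hK : IsCompact K) (hμK : μ Kᶜ = 0)
    (C γ : ℝ) (hC : 1 ≤ C) (hγ : 0 < γ)
    (hreg : ∀ x ∈ K, ∀ r : ℝ, 0 < r → r < 1 →
      ENNReal.ofReal (C⁻¹ * r ^ γ) ≤ μ (ball x r) ∧
      μ (ball x r) ≤ ENNReal.ofReal (C * r ^ γ)) :
    ∃ c : ℝ, 0 < c ∧ ∃ ε₀ : ℝ, 0 < ε₀ ∧ ∀ ε : ℝ, 0 < ε → ε < ε₀ →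
      ENNReal.ofReal (c * ε ^ γ) ≤
        Measure.map (fun p : EuclideanSpace ℝ (Fin d) × EuclideanSpace ℝ (Fin d) =>
          p.1 - p.2) (μ.prod μ) (ball 0 ε) := by
  have hC0 : (0:ℝ) < C := lt_of_lt_of_le one_pos hC
  refine ⟨C⁻¹, inv_pos.mpr hC0, 1, one_pos, fun ε hε hε1 => ?_⟩
  have hsub : Measurable (fun p : EuclideanSpace ℝ (Fin d) × EuclideanSpace ℝ (Fin d) =>
      p.1 - p.2) := measurable_fst.sub measurable_snd
  rw [Measure.map_apply hsub measurableSet_ball,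
    Measure.prod_apply (hsub measurableSet_ball)]
  have hμK1 : μ K = 1 := by
    have h1 : (1:ENNReal) = μ Set.univ := (measure_univ).symm
    have h2 : μ Set.univ ≤ μ K + μ Kᶜ := by
      rw [← Set.union_compl_self K] ; exact measure_union_le _ _
    have h3 : (1:ENNReal) ≤ μ K := by
      rw [h1]; simpa [hμK] using h2
    exact le_antisymm prob_le_one h3
  have hpre : ∀ x, (Prod.mk x ⁻¹'
      ((fun p : EuclideanSpace ℝ (Fin d) × EuclideanSpace ℝ (Fin d) => p.1 - p.2) ⁻¹'
        ball 0 ε)) = ball x ε := by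
    intro x
    ext y
    simp [mem_ball, dist_eq_norm, norm_sub_rev x y]
  calc ENNReal.ofReal (C⁻¹ * ε ^ γ)
      = ENNReal.ofReal (C⁻¹ * ε ^ γ) * μ K := by rw [hμK1, mul_one]
    _ = ∫⁻ _ in K, ENNReal.ofReal (C⁻¹ * ε ^ γ) ∂μ := by
        rw [setLIntegral_const]
    _ ≤ ∫⁻ x in K, μ (ball x ε) ∂μ := by
        apply setLIntegral_mono' hK.measurableSet
        intro x hx
        exact (hreg x hx ε hε hε1).1
    _ ≤ ∫⁻ x, μ (ball x ε) ∂μ := setLIntegral_le_lintegral _ _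
    _ = ∫⁻ x, μ (Prod.mk x ⁻¹'
        ((fun p : EuclideanSpace ℝ (Fin d) × EuclideanSpace ℝ (Fin d) => p.1 - p.2) ⁻¹'
          ball 0 ε)) ∂μ := by
        apply lintegral_congr
        intro x
        rw [hpre x]
end

section
/- Let μ be a Borel probability measure on ℝ^d with μ*μ ∈ L^∞(ℝ^d). Then for all f, g ∈ L^2(μ) and 1 ≤ p ≤ ∞, one has ‖fμ * gμ‖_{L^p(ℝ^d)} ≤ ‖μ*μ‖_∞^{1/p'} · ‖f‖_{L^p(μ)} · ‖g‖_{L^p(μ)}, where p' is the conjugate exponent. -/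
/-!
Write `ν = T₊(Fμ ⊗ Gμ)` and `τ = T₊(Fᵖμ ⊗ Gᵖμ)`, where `T₊(μ ⊗ μ) ≤ K • vol`. Hölder's
inequality on `T ⁻¹' A` gives `ν A ≤ τ A ^ (1/p) * (K * vol A) ^ (1/p')` for every measurable `A`.
Dividing by the volume of small balls and letting the radius tend to `0` (Besicovitch
differentiation) turns this into the pointwise bound `dν/dvol ≤ (dτ/dvol) ^ (1/p) * K ^ (1/p')`;
integrating its `p`-th power gives `‖dν/dvol‖ₚᵖ ≤ K ^ (p/p') * τ univ = K ^ (p/p') * ‖F‖ₚᵖ * ‖G‖ₚᵖ`.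
For `p = ∞` the bound `ν ≤ (K * ‖F‖_∞ * ‖G‖_∞) • vol` is immediate.
-/

open MeasureTheory Metric Set
open scoped ENNReal NNReal

namespace ENNReal

theorem div_le_rpow_div_mul_rpow {n t K v : ℝ≥0∞} {a : ℝ} (ha0 : 0 ≤ a) (ha1 : a ≤ 1)
    (hv0 : v ≠ 0) (h : n ≤ t ^ a * (K * v) ^ (1 - a)) :
    n / v ≤ (t / v) ^ a * K ^ (1 - a) := by
  rcases eq_or_ne v ⊤ with rfl | hv
  · simp
  refine div_le_of_le_mul (h.trans_eq ?_)
  have hv_split : v = v ^ a * v ^ (1 - a) := by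
    rw [← rpow_add _ _ hv0 hv, add_sub_cancel, rpow_one]
  calc t ^ a * (K * v) ^ (1 - a)
      = (t / v * v) ^ a * (K ^ (1 - a) * v ^ (1 - a)) := by
        rw [ENNReal.div_mul_cancel hv0 hv, mul_rpow_of_nonneg _ _ (by linarith)]
    _ = (t / v) ^ a * K ^ (1 - a) * (v ^ a * v ^ (1 - a)) := by
        rw [mul_rpow_of_nonneg _ _ ha0]; ring
    _ = (t / v) ^ a * K ^ (1 - a) * v := by rw [← hv_split]

end ENNReal

variable {α β : Type*} [MeasurableSpace α] [MeasurableSpace β]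

theorem isLocallyFiniteMeasure_of_le_rpow_mul [TopologicalSpace β] [OpensMeasurableSpace β]
    {ν τ vol : Measure β} [IsLocallyFiniteMeasure τ] [IsLocallyFiniteMeasure vol]
    {a : ℝ} (ha0 : 0 ≤ a) (ha1 : a ≤ 1) {K : ℝ≥0}
    (h : ∀ A, MeasurableSet A → ν A ≤ τ A ^ a * (K * vol A) ^ (1 - a)) :
    IsLocallyFiniteMeasure ν := by
  refine ⟨fun x => ?_⟩
  obtain ⟨s, hxs, hs, hτs⟩ := τ.exists_isOpen_measure_lt_top x
  obtain ⟨s', hxs', hs', hvols'⟩ := vol.exists_isOpen_measure_lt_top x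
  refine ⟨s ∩ s', (hs.inter hs').mem_nhds ⟨hxs, hxs'⟩,
    (h _ (hs.inter hs').measurableSet).trans_lt (ENNReal.mul_lt_top ?_ ?_)⟩
  · exact ENNReal.rpow_lt_top_of_nonneg ha0 (measure_ne_top_of_subset inter_subset_left hτs.ne)
  · exact ENNReal.rpow_lt_top_of_nonneg (by linarith)
      (ENNReal.mul_lt_top ENNReal.coe_lt_top ((measure_mono inter_subset_right).trans_lt hvols')).ne

theorem ae_rnDeriv_le_of_le_smul {ν vol : Measure β} [SigmaFinite vol] {c : ℝ≥0∞}
    (h : ν ≤ c • vol) : ∀ᵐ x ∂vol, ν.rnDeriv vol x ≤ c :=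
  ae_le_of_forall_setLIntegral_le_of_sigmaFinite (Measure.measurable_rnDeriv ν vol)
    fun s _ _ => by
      rw [setLIntegral_const]
      exact (Measure.setLIntegral_rnDeriv_le s).trans (h s)

theorem eLpNorm_rnDeriv_le_of_ae_le_rpow_mul {ν τ vol : Measure β} {p : ℝ≥0∞} (hp0 : p ≠ 0)
    (hpt : p ≠ ⊤) {c : ℝ≥0∞}
    (h : ∀ᵐ x ∂vol, ν.rnDeriv vol x ≤ τ.rnDeriv vol x ^ p.toReal⁻¹ * c) :
    eLpNorm (ν.rnDeriv vol) p vol ≤ τ univ ^ p.toReal⁻¹ * c := by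
  have hq : 0 < p.toReal := ENNReal.toReal_pos hp0 hpt
  have hpow : ∀ᵐ x ∂vol, ν.rnDeriv vol x ^ p.toReal ≤ τ.rnDeriv vol x * c ^ p.toReal := by
    filter_upwards [h] with x hx
    calc ν.rnDeriv vol x ^ p.toReal ≤ (τ.rnDeriv vol x ^ p.toReal⁻¹ * c) ^ p.toReal :=
          ENNReal.rpow_le_rpow hx hq.le
      _ = τ.rnDeriv vol x * c ^ p.toReal := by
          rw [ENNReal.mul_rpow_of_nonneg _ _ hq.le, ← ENNReal.rpow_mul, inv_mul_cancel₀ hq.ne',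
            ENNReal.rpow_one]
  have hint : ∫⁻ x, ν.rnDeriv vol x ^ p.toReal ∂vol ≤ τ univ * c ^ p.toReal :=
    calc ∫⁻ x, ν.rnDeriv vol x ^ p.toReal ∂vol ≤ ∫⁻ x, τ.rnDeriv vol x * c ^ p.toReal ∂vol :=
          lintegral_mono_ae hpow
      _ = (∫⁻ x, τ.rnDeriv vol x ∂vol) * c ^ p.toReal :=
          lintegral_mul_const _ (Measure.measurable_rnDeriv τ vol)
      _ ≤ τ univ * c ^ p.toReal := by gcongr; exact Measure.lintegral_rnDeriv_le
  rw [eLpNorm_eq_lintegral_rpow_enorm_toReal hp0 hpt]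
  simp only [enorm_eq_self]
  calc (∫⁻ x, ν.rnDeriv vol x ^ p.toReal ∂vol) ^ (1 / p.toReal)
      ≤ (τ univ * c ^ p.toReal) ^ (1 / p.toReal) := by gcongr
    _ = τ univ ^ p.toReal⁻¹ * c := by
      rw [ENNReal.mul_rpow_of_nonneg _ _ (by positivity), ← ENNReal.rpow_mul,
        mul_one_div_cancel hq.ne', ENNReal.rpow_one, one_div]

/-- For `T (x, y) = x + y` this is the convolution `Fμ * Gμ`. -/
noncomputable def weightedPushforward (T : α × α → β) (μ : Measure α) (F G : α → ℝ≥0∞) :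
    Measure β :=
  ((μ.withDensity F).prod (μ.withDensity G)).map T

namespace weightedPushforward

variable {T : α × α → β} {μ : Measure α} {F G : α → ℝ≥0∞}

theorem apply [SFinite μ] (hT : Measurable T) (hF : Measurable F) (hG : Measurable G)
    {A : Set β} (hA : MeasurableSet A) :
    weightedPushforward T μ F G A = ∫⁻ z in T ⁻¹' A, F z.1 * G z.2 ∂μ.prod μ := by
  rw [weightedPushforward, prod_withDensity hF hG, Measure.map_apply hT hA,
    withDensity_apply _ (hT hA)]

theorem apply_univ [SFinite μ] (hT : Measurable T) :
    weightedPushforward T μ F G univ = (∫⁻ x, F x ∂μ) * ∫⁻ x, G x ∂μ := by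
  rw [weightedPushforward, Measure.map_apply hT MeasurableSet.univ, preimage_univ,
    ← univ_prod_univ, Measure.prod_prod, withDensity_apply _ MeasurableSet.univ,
    withDensity_apply _ MeasurableSet.univ, Measure.restrict_univ]

theorem absolutelyContinuous [SFinite μ] (hT : Measurable T) :
    weightedPushforward T μ F G ≪ (μ.prod μ).map T :=
  ((withDensity_absolutelyContinuous μ F).prod (withDensity_absolutelyContinuous μ G)).map hT

theorem eq_zero_of_eLpNorm_left {p : ℝ≥0∞} (hp : p ≠ 0) (hF : Measurable F)
    (hF0 : eLpNorm F p μ = 0) : weightedPushforward T μ F G = 0 := by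
  rw [eLpNorm_eq_zero_iff hF.aestronglyMeasurable hp] at hF0
  rw [weightedPushforward, withDensity_congr_ae hF0, withDensity_zero, Measure.zero_prod,
    Measure.map_zero]

theorem eq_zero_of_eLpNorm_right {p : ℝ≥0∞} (hp : p ≠ 0) (hG : Measurable G)
    (hG0 : eLpNorm G p μ = 0) : weightedPushforward T μ F G = 0 := by
  rw [eLpNorm_eq_zero_iff hG.aestronglyMeasurable hp] at hG0
  rw [weightedPushforward, withDensity_congr_ae hG0, withDensity_zero, Measure.prod_zero,
    Measure.map_zero]

/-- Hölder's inequality on `T ⁻¹' A`, between the exponents `1` and `p`. -/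
theorem le_rpow_mul_rpow [SFinite μ] (hT : Measurable T) (hF : Measurable F) (hG : Measurable G)
    {p : ℝ} (hp : 1 ≤ p) {A : Set β} (hA : MeasurableSet A) :
    weightedPushforward T μ F G A ≤
      weightedPushforward T μ (fun x => F x ^ p) (fun x => G x ^ p) A ^ p⁻¹ *
        (μ.prod μ).map T A ^ (1 - p⁻¹) := by
  have hp0 : 0 < p := zero_lt_one.trans_le hp
  have hFp : Measurable fun x => F x ^ p := hF.pow_const p
  have hGp : Measurable fun x => G x ^ p := hG.pow_const p
  have holder := eLpNorm_le_eLpNorm_mul_rpow_measure_univ (μ := (μ.prod μ).restrict (T ⁻¹' A))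
    (f := fun z => F z.1 * G z.2) (ENNReal.one_le_ofReal.mpr hp)
    ((hF.comp measurable_fst).mul (hG.comp measurable_snd)).aestronglyMeasurable
  rw [eLpNorm_one_eq_lintegral_enorm, eLpNorm_eq_lintegral_rpow_enorm_toReal
    (by positivity) ENNReal.ofReal_ne_top, ENNReal.toReal_ofReal hp0.le] at holder
  simp only [enorm_eq_self, ENNReal.toReal_one, Measure.restrict_apply_univ, div_one,
    one_div] at holder
  rw [apply hT hF hG hA, apply hT hFp hGp hA, Measure.map_apply hT hA]
  simpa only [ENNReal.mul_rpow_of_nonneg _ _ hp0.le] using holder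

theorem rpow_apply_univ [SFinite μ] (hT : Measurable T) {p : ℝ≥0∞} (hp0 : p ≠ 0)
    (hpt : p ≠ ⊤) :
    weightedPushforward T μ (fun x => F x ^ p.toReal) (fun x => G x ^ p.toReal) univ =
      (eLpNorm F p μ * eLpNorm G p μ) ^ p.toReal := by
  rw [apply_univ hT, ENNReal.mul_rpow_of_nonneg _ _ ENNReal.toReal_nonneg,
    eLpNorm_eq_eLpNorm' hp0 hpt, eLpNorm_eq_eLpNorm' hp0 hpt,
    ← lintegral_rpow_enorm_eq_rpow_eLpNorm' (ENNReal.toReal_pos hp0 hpt),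
    ← lintegral_rpow_enorm_eq_rpow_eLpNorm' (ENNReal.toReal_pos hp0 hpt)]
  simp only [enorm_eq_self]

theorem le_smul [SFinite μ] (hT : Measurable T) {vol : Measure β} {K : ℝ≥0}
    (hK : (μ.prod μ).map T ≤ K • vol) (hF : Measurable F) (hG : Measurable G) :
    weightedPushforward T μ F G ≤ (K * eLpNorm F ⊤ μ * eLpNorm G ⊤ μ) • vol := by
  have hbound : ∀ᵐ z ∂μ.prod μ, F z.1 * G z.2 ≤ eLpNorm F ⊤ μ * eLpNorm G ⊤ μ := by
    filter_upwards [Measure.quasiMeasurePreserving_fst.ae (enorm_ae_le_eLpNormEssSup F μ),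
      Measure.quasiMeasurePreserving_snd.ae (enorm_ae_le_eLpNormEssSup G μ)] with z hF hG
    rw [eLpNorm_exponent_top]
    exact mul_le_mul' hF hG
  refine Measure.le_iff.2 fun A hA => ?_
  calc weightedPushforward T μ F G A
      = ∫⁻ z in T ⁻¹' A, F z.1 * G z.2 ∂μ.prod μ := apply hT hF hG hA
    _ ≤ eLpNorm F ⊤ μ * eLpNorm G ⊤ μ * (μ.prod μ).map T A := by
      rw [Measure.map_apply hT hA, ← setLIntegral_const]
      exact lintegral_mono_ae (ae_restrict_of_ae hbound)
    _ ≤ eLpNorm F ⊤ μ * eLpNorm G ⊤ μ * (K * vol A) := by gcongr; exact hK A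
    _ = ((K * eLpNorm F ⊤ μ * eLpNorm G ⊤ μ) • vol) A := by
      rw [Measure.smul_apply, smul_eq_mul]; ring

end weightedPushforward

theorem eLpNorm_rnDeriv_weightedPushforward_top_le {T : α × α → β} {μ : Measure α} [SFinite μ]
    {vol : Measure β} [SigmaFinite vol] {F G : α → ℝ≥0∞} {K : ℝ≥0} (hT : Measurable T)
    (hK : (μ.prod μ).map T ≤ K • vol) (hF : Measurable F) (hG : Measurable G) :
    eLpNorm ((weightedPushforward T μ F G).rnDeriv vol) ⊤ vol ≤
      K * eLpNorm F ⊤ μ * eLpNorm G ⊤ μ := by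
  rw [eLpNorm_exponent_top]
  exact essSup_le_of_ae_le _ (ae_rnDeriv_le_of_le_smul (weightedPushforward.le_smul hT hK hF hG))

section Besicovitch

variable [MetricSpace β] [BorelSpace β] [SecondCountableTopology β] [HasBesicovitchCovering β]
  {vol : Measure β} [IsLocallyFiniteMeasure vol] [vol.IsOpenPosMeasure]

theorem ae_rnDeriv_le_rpow_mul_of_le {ν τ : Measure β} [IsLocallyFiniteMeasure τ]
    {a : ℝ} (ha0 : 0 ≤ a) (ha1 : a ≤ 1) {K : ℝ≥0}
    (h : ∀ A, MeasurableSet A → ν A ≤ τ A ^ a * (K * vol A) ^ (1 - a)) :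
    ∀ᵐ x ∂vol, ν.rnDeriv vol x ≤ τ.rnDeriv vol x ^ a * (K : ℝ≥0∞) ^ (1 - a) := by
  have := isLocallyFiniteMeasure_of_le_rpow_mul ha0 ha1 h
  filter_upwards [Besicovitch.ae_tendsto_rnDeriv ν vol, Besicovitch.ae_tendsto_rnDeriv τ vol]
    with x hν hτ
  have hK : (K : ℝ≥0∞) ^ (1 - a) ≠ ⊤ :=
    ENNReal.rpow_ne_top_of_nonneg (by linarith) ENNReal.coe_ne_top
  refine le_of_tendsto_of_tendsto hν
    (ENNReal.Tendsto.mul_const ((ENNReal.continuous_rpow_const.tendsto _).comp hτ) (.inr hK))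
    (eventually_nhdsWithin_of_forall fun r hr => ?_)
  exact ENNReal.div_le_rpow_div_mul_rpow ha0 ha1 (measure_closedBall_pos vol x hr).ne'
    (h _ measurableSet_closedBall)

variable {T : α × α → β} {μ : Measure α} [SFinite μ] {F G : α → ℝ≥0∞} {K : ℝ≥0}

theorem eLpNorm_rnDeriv_weightedPushforward_le_of_ne_top (hT : Measurable T)
    (hK : (μ.prod μ).map T ≤ K • vol) (hF : Measurable F) (hG : Measurable G)
    {p : ℝ≥0∞} (hp : 1 ≤ p) (hpt : p ≠ ⊤) (hFp : eLpNorm F p μ ≠ ⊤) (hGp : eLpNorm G p μ ≠ ⊤) :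
    eLpNorm ((weightedPushforward T μ F G).rnDeriv vol) p vol ≤
      (K : ℝ≥0∞) ^ (1 - p⁻¹).toReal * eLpNorm F p μ * eLpNorm G p μ := by
  have hp0 : p ≠ 0 := (zero_lt_one.trans_le hp).ne'
  have hq : 1 ≤ p.toReal := by simpa using ENNReal.toReal_mono hpt hp
  set τ := weightedPushforward T μ (fun x => F x ^ p.toReal) (fun x => G x ^ p.toReal)
  have hτ : τ univ = (eLpNorm F p μ * eLpNorm G p μ) ^ p.toReal :=
    weightedPushforward.rpow_apply_univ hT hp0 hpt
  have : IsFiniteMeasure τ := ⟨by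
    rw [hτ]; exact ENNReal.rpow_lt_top_of_nonneg (by positivity) (ENNReal.mul_ne_top hFp hGp)⟩
  have hkey : ∀ A, MeasurableSet A →
      weightedPushforward T μ F G A ≤ τ A ^ p.toReal⁻¹ * (K * vol A) ^ (1 - p.toReal⁻¹) :=
    fun A hA => (weightedPushforward.le_rpow_mul_rpow hT hF hG hq hA).trans (by
      gcongr
      · exact sub_nonneg.2 (inv_le_one_of_one_le₀ hq)
      · exact hK A)
  have hexp : (1 - p⁻¹).toReal = 1 - p.toReal⁻¹ := by
    rw [ENNReal.toReal_sub_of_le (ENNReal.inv_le_one.2 hp) ENNReal.one_ne_top,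
      ENNReal.toReal_one, ENNReal.toReal_inv]
  calc eLpNorm ((weightedPushforward T μ F G).rnDeriv vol) p vol
      ≤ τ univ ^ p.toReal⁻¹ * (K : ℝ≥0∞) ^ (1 - p.toReal⁻¹) :=
        eLpNorm_rnDeriv_le_of_ae_le_rpow_mul hp0 hpt <| ae_rnDeriv_le_rpow_mul_of_le
          (inv_nonneg.2 (zero_le_one.trans hq)) (inv_le_one_of_one_le₀ hq) hkey
    _ = (K : ℝ≥0∞) ^ (1 - p⁻¹).toReal * eLpNorm F p μ * eLpNorm G p μ := by
        rw [hτ, ENNReal.rpow_rpow_inv (ENNReal.toReal_pos hp0 hpt).ne', hexp]; ring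

theorem eLpNorm_rnDeriv_weightedPushforward_le (hT : Measurable T)
    (hK : (μ.prod μ).map T ≤ K • vol) (hF : Measurable F) (hG : Measurable G)
    {p : ℝ≥0∞} (hp : 1 ≤ p) :
    eLpNorm ((weightedPushforward T μ F G).rnDeriv vol) p vol ≤
      (K : ℝ≥0∞) ^ (1 - p⁻¹).toReal * eLpNorm F p μ * eLpNorm G p μ := by
  have hp0 : p ≠ 0 := (zero_lt_one.trans_le hp).ne'
  by_cases hν : weightedPushforward T μ F G = 0
  · rw [hν, eLpNorm_congr_ae (Measure.rnDeriv_zero vol), eLpNorm_zero]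
    exact zero_le
  have hK0 : K ≠ 0 := by
    rintro rfl
    have hmap : (μ.prod μ).map T = 0 := Measure.nonpos_iff_eq_zero'.1 (by simpa using hK)
    exact hν (Measure.absolutelyContinuous_zero_iff.1
      (hmap ▸ weightedPushforward.absolutelyContinuous hT))
  have hF0 : eLpNorm F p μ ≠ 0 := fun h =>
    hν (weightedPushforward.eq_zero_of_eLpNorm_left hp0 hF h)
  have hG0 : eLpNorm G p μ ≠ 0 := fun h =>
    hν (weightedPushforward.eq_zero_of_eLpNorm_right hp0 hG h)
  rcases eq_or_ne p ⊤ with rfl | hpt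
  · simpa using eLpNorm_rnDeriv_weightedPushforward_top_le hT hK hF hG
  have hKp : (K : ℝ≥0∞) ^ (1 - p⁻¹).toReal ≠ 0 := by simp [hK0]
  by_cases hFt : eLpNorm F p μ = ⊤
  · simp [hFt, ENNReal.mul_top hKp, ENNReal.top_mul hG0]
  by_cases hGt : eLpNorm G p μ = ⊤
  · simp [hGt, ENNReal.mul_top (mul_ne_zero hKp hF0)]
  exact eLpNorm_rnDeriv_weightedPushforward_le_of_ne_top hT hK hF hG hp hpt hFt hGt

end Besicovitch

theorem bilinear_conv_estimate_general {d : ℕ}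
    (μ : Measure (EuclideanSpace ℝ (Fin d))) [IsProbabilityMeasure μ]
    (M : ℝ)
    (hbd : ∀ A : Set (EuclideanSpace ℝ (Fin d)), MeasurableSet A →
      Measure.map (fun p : EuclideanSpace ℝ (Fin d) × EuclideanSpace ℝ (Fin d) =>
        p.1 + p.2) (μ.prod μ) A ≤ ENNReal.ofReal M * volume A)
    (f g : EuclideanSpace ℝ (Fin d) → ℝ)
    (hfm : Measurable f) (hgm : Measurable g) (hf0 : 0 ≤ f) (hg0 : 0 ≤ g)
    (p : ℝ≥0∞) (hp : 1 ≤ p) :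
    eLpNorm (fun x =>
        ((Measure.map (fun q : EuclideanSpace ℝ (Fin d) × EuclideanSpace ℝ (Fin d) =>
            q.1 + q.2)
          ((μ.withDensity fun y => ENNReal.ofReal (f y)).prod
            (μ.withDensity fun y => ENNReal.ofReal (g y)))).rnDeriv volume x).toReal)
        p volume ≤
      ENNReal.ofReal M ^ (1 - p⁻¹).toReal * eLpNorm f p μ * eLpNorm g p μ := by
  -- `hbd` is `(μ.prod μ).map (· + ·) ≤ M.toNNReal • volume`, as `ENNReal.ofReal M = ↑M.toNNReal`.
  have hconv := eLpNorm_rnDeriv_weightedPushforward_le (vol := volume) (K := M.toNNReal)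
    (T := fun q => q.1 + q.2) (measurable_fst.add measurable_snd) (Measure.le_iff.2 hbd)
    hfm.ennreal_ofReal hgm.ennreal_ofReal hp
  rw [← eLpNorm_ofReal f (ae_of_all _ hf0), ← eLpNorm_ofReal g (ae_of_all _ hg0)]
  refine (eLpNorm_mono_enorm fun x => ?_).trans hconv
  rw [Real.enorm_of_nonneg ENNReal.toReal_nonneg, enorm_eq_self]
  exact ENNReal.ofReal_toReal_le

/-- Bilinear convolution estimate: if `μ*μ` has density bounded by `M`, then for
nonnegative `f, g ∈ L^2(μ)` and `1 ≤ p ≤ ∞`, the density of `fμ * gμ` satisfies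
`‖fμ * gμ‖_{L^p} ≤ M^{1/p'} ‖f‖_{L^p(μ)} ‖g‖_{L^p(μ)}`. -/
theorem bilinear_conv_estimate {d : ℕ}
    (μ : Measure (EuclideanSpace ℝ (Fin d))) [IsProbabilityMeasure μ]
    (M : ℝ) (hM : 0 ≤ M)
    (hbd : ∀ A : Set (EuclideanSpace ℝ (Fin d)), MeasurableSet A →
      Measure.map (fun p : EuclideanSpace ℝ (Fin d) × EuclideanSpace ℝ (Fin d) =>
        p.1 + p.2) (μ.prod μ) A ≤ ENNReal.ofReal M * volume A)
    (f g : EuclideanSpace ℝ (Fin d) → ℝ)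
    (hfm : Measurable f) (hgm : Measurable g) (hf0 : 0 ≤ f) (hg0 : 0 ≤ g)
    (hf2 : MemLp f 2 μ) (hg2 : MemLp g 2 μ)
    (p : ℝ≥0∞) (hp : 1 ≤ p) :
    eLpNorm (fun x =>
        ((Measure.map (fun q : EuclideanSpace ℝ (Fin d) × EuclideanSpace ℝ (Fin d) =>
            q.1 + q.2)
          ((μ.withDensity fun y => ENNReal.ofReal (f y)).prod
            (μ.withDensity fun y => ENNReal.ofReal (g y)))).rnDeriv volume x).toReal)
        p volume ≤
      ENNReal.ofReal M ^ (1 - p⁻¹).toReal * eLpNorm f p μ * eLpNorm g p μ :=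
  bilinear_conv_estimate_general μ M hbd f g hfm hgm hf0 hg0 p hp
end

section
/- Let μ be a Borel probability measure on ℝ^1 with compact support such that μ*μ has a bounded density. Then μ cannot satisfy the two-sided regularity condition C^{-1} r^{1/2} ≤ μ(B(x,r)) ≤ C r^{1/2} for all x in its support and 0 < r < 1 (for any constant C ≥ 1). -/
/-!
Let `λ = μ ∗ μ⁻` be the difference measure of `μ`. Its correlation integral
`(λ ⊗ λ) {|s - t| ≤ r}` coincides with that of `μ ∗ μ`, since both are the mass of
`μ ∗ μ ∗ μ⁻ ∗ μ⁻` on `[-r, r]`; a bounded density of `μ ∗ μ` makes it `O(r)`.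
On the other hand, `1/2`-regularity of `μ` gives `λ(B(0, ρ)) ≍ √ρ`. Along radii
`ρ_k = Λ^k r` growing fast enough, the annuli `B(0, ρ_{k+1}) \ B(0, ρ_k)` then carry
`λ`-mass `≳ √ρ_{k+1}`; covering such an annulus by `≈ ρ_{k+1} / r` intervals of length `r`,
Cauchy–Schwarz shows that it contributes `≳ r` to the correlation integral. With `N` annuli
this gives `≳ N r`, which is incompatible with `O(r)` once `N` is large.
-/

open MeasureTheory Metric Set Function
open scoped ENNReal

theorem ENNReal.sq_sum_le_card_mul_sum_sq {ι : Type*} (s : Finset ι) (f : ι → ℝ≥0∞) :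
    (∑ i ∈ s, f i) ^ 2 ≤ s.card * ∑ i ∈ s, f i ^ 2 := by
  by_cases hf : ∀ i ∈ s, f i ≠ ∞
  · have key := ENNReal.coe_le_coe.2
      (_root_.sq_sum_le_card_mul_sum_sq (s := s) (f := fun i => (f i).toNNReal))
    push_cast at key
    rwa [Finset.sum_congr rfl fun i hi => ENNReal.coe_toNNReal (hf i hi),
      Finset.sum_congr rfl fun i hi => congrArg (· ^ 2) (ENNReal.coe_toNNReal (hf i hi))] at key
  · obtain ⟨i, hi, hfi⟩ : ∃ i ∈ s, f i = ∞ := by simpa using hf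
    have hs : (s.card : ℝ≥0∞) ≠ 0 := by simpa using Finset.ne_empty_of_mem hi
    have : ∑ i ∈ s, f i ^ 2 = ∞ :=
      eq_top_mono (Finset.single_le_sum (f := fun i => f i ^ 2) (fun _ _ => zero_le) hi)
        (by simp [hfi])
    simp [this, ENNReal.mul_top hs]

section CorrelationIntegral

variable {X : Type*} [PseudoMetricSpace X] [MeasurableSpace X]

noncomputable def correlationIntegral (ν : Measure X) (r : ℝ) : ℝ≥0∞ :=
  (ν.prod ν) {p | dist p.1 p.2 ≤ r}

variable [OpensMeasurableSpace X] [SecondCountableTopology X]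

theorem measurableSet_dist_le (r : ℝ) : MeasurableSet {p : X × X | dist p.1 p.2 ≤ r} :=
  measurableSet_le measurable_dist measurable_const

theorem correlationIntegral_le_of_measure_closedBall_le (ν : Measure X) [SFinite ν] {r : ℝ}
    {c : ℝ≥0∞} (h : ∀ x, ν (closedBall x r) ≤ c) : correlationIntegral ν r ≤ c * ν univ := by
  rw [correlationIntegral, Measure.prod_apply (measurableSet_dist_le r), ← lintegral_const]
  refine lintegral_mono fun x => ?_
  convert h x using 2
  ext y
  simp [dist_comm]

theorem correlationIntegral_restrict (ν : Measure X) [SFinite ν] (r : ℝ) (A : Set X) :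
    correlationIntegral (ν.restrict A) r = (ν.prod ν) ({p | dist p.1 p.2 ≤ r} ∩ A ×ˢ A) := by
  rw [correlationIntegral, Measure.prod_restrict, Measure.restrict_apply (measurableSet_dist_le r)]

theorem sum_correlationIntegral_restrict_le {ι : Type*} (ν : Measure X) [SFinite ν] (r : ℝ)
    {A : ι → Set X} (hA : ∀ k, MeasurableSet (A k)) (hd : Pairwise (Disjoint on A))
    (s : Finset ι) :
    ∑ k ∈ s, correlationIntegral (ν.restrict (A k)) r ≤ correlationIntegral ν r := by
  simp_rw [correlationIntegral_restrict]
  rw [← measure_biUnion_finset]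
  · exact measure_mono (iUnion₂_subset fun _ _ => inter_subset_left)
  · exact fun k _ l _ hkl =>
      (disjoint_prod.2 (.inl (hd hkl))).mono inter_subset_right inter_subset_right
  · exact fun k _ => (measurableSet_dist_le r).inter ((hA k).prod (hA k))

end CorrelationIntegral

namespace MeasureTheory.Measure

variable {G : Type*} [NormedAddCommGroup G] [MeasurableSpace G] [BorelSpace G]
  [SecondCountableTopology G]

theorem conv_neg_eq_map_sub (μ ν : Measure G) [SFinite μ] [SFinite ν] :
    μ ∗ ν.neg = (μ.prod ν).map fun p => p.1 - p.2 := by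
  rw [conv, neg_def, ← map_id (μ := μ), map_prod_map _ _ measurable_id measurable_neg,
    map_map (by fun_prop) (by fun_prop), map_id]
  simp_rw [comp_def, Prod.map, id, ← sub_eq_add_neg]

theorem neg_conv (μ ν : Measure G) [SFinite μ] [SFinite ν] : (μ ∗ ν).neg = μ.neg ∗ ν.neg := by
  simpa [neg_def] using map_conv_addMonoidHom (μ := μ) (ν := ν) negAddMonoidHom measurable_neg

theorem conv_neg_apply_ball_zero (μ : Measure G) [SFinite μ] (ρ : ℝ) :
    (μ ∗ μ.neg) (ball 0 ρ) = ∫⁻ x, μ (ball x ρ) ∂μ := by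
  rw [conv_neg_eq_map_sub, map_apply (by fun_prop) measurableSet_ball,
    prod_apply (measurableSet_ball.preimage (by fun_prop))]
  refine lintegral_congr fun x => congrArg μ ?_
  ext y
  simp [dist_eq_norm, norm_sub_rev]

theorem le_conv_neg_apply_ball_zero (μ : Measure G) [IsProbabilityMeasure μ] {ρ : ℝ}
    {a : ℝ≥0∞} (h : ∀ᵐ x ∂μ, a ≤ μ (ball x ρ)) : a ≤ (μ ∗ μ.neg) (ball 0 ρ) := by
  simpa [conv_neg_apply_ball_zero] using lintegral_mono_ae h

theorem conv_neg_apply_ball_zero_le (μ : Measure G) [IsProbabilityMeasure μ] {ρ : ℝ}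
    {b : ℝ≥0∞} (h : ∀ᵐ x ∂μ, μ (ball x ρ) ≤ b) : (μ ∗ μ.neg) (ball 0 ρ) ≤ b := by
  simpa [conv_neg_apply_ball_zero] using lintegral_mono_ae h

theorem correlationIntegral_eq_conv_neg_apply_closedBall (ν : Measure G) [SFinite ν] (r : ℝ) :
    correlationIntegral ν r = (ν ∗ ν.neg) (closedBall 0 r) := by
  rw [conv_neg_eq_map_sub, map_apply (by fun_prop) measurableSet_closedBall, correlationIntegral]
  congr 1
  ext p
  simp [dist_eq_norm]

theorem correlationIntegral_conv_self (μ : Measure G) [SFinite μ] (r : ℝ) :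
    correlationIntegral (μ ∗ μ) r = correlationIntegral (μ ∗ μ.neg) r := by
  simp_rw [correlationIntegral_eq_conv_neg_apply_closedBall, neg_conv, Measure.neg_neg]
  congr 1
  calc (μ ∗ μ) ∗ (μ.neg ∗ μ.neg) = μ ∗ (μ.neg ∗ (μ ∗ μ.neg)) := by
        rw [conv_assoc, ← conv_assoc μ μ.neg, conv_comm (μ ∗ μ.neg)]
    _ = (μ ∗ μ.neg) ∗ (μ.neg ∗ μ) := by rw [conv_assoc, conv_comm μ.neg μ]

end MeasureTheory.Measure

open Measure

theorem pairwise_disjoint_ball_sdiff_ball {X : Type*} [PseudoMetricSpace X] (x : X)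
    {f : ℕ → ℝ} (hf : Monotone f) :
    Pairwise (Disjoint on fun k => ball x (f (k + 1)) \ ball x (f k)) :=
  (pairwise_disjoint_on _).2 fun _ _ hmn =>
    (disjoint_sdiff_left.mono_right (sdiff_subset.trans (ball_subset_ball (hf hmn)))).symm

theorem sq_measure_univ_le_mul_correlationIntegral (ν : Measure ℝ) [SFinite ν] {a r : ℝ}
    (hr : 0 < r) (n : ℕ) (hν : ν (Ico a (a + n * r))ᶜ = 0) :
    ν univ ^ 2 ≤ n * correlationIntegral ν r := by
  set f : ℕ → ℝ := fun i => a + i * r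
  set I : ℕ → Set ℝ := fun i => Ico (f i) (f (i + 1))
  have hf : Monotone f := fun i j hij => by simp only [f]; gcongr
  have hI : Pairwise (Disjoint on I) := by
    simpa [Order.succ_eq_add_one] using hf.pairwise_disjoint_on_Ico_succ
  have hcover : ν univ ≤ ∑ i ∈ Finset.range n, ν (I i) :=
    calc ν univ = ν (Ico a (a + n * r)) := (measure_congr (ae_eq_univ.2 hν)).symm
      _ ≤ ν (⋃ i ∈ Finset.range n, I i) := by
          gcongr
          simpa [f, I] using Ico_subset_biUnion_Ico n f
      _ ≤ _ := measure_biUnion_finset_le _ _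
  have hdiag : ∑ i ∈ Finset.range n, ν (I i) ^ 2 ≤ correlationIntegral ν r :=
    calc ∑ i ∈ Finset.range n, ν (I i) ^ 2
        = ∑ i ∈ Finset.range n, (ν.prod ν) (I i ×ˢ I i) := by simp [prod_prod, sq]
      _ = (ν.prod ν) (⋃ i ∈ Finset.range n, I i ×ˢ I i) :=
          (measure_biUnion_finset (fun i _ j _ hij => disjoint_prod.2 (.inl (hI hij)))
            fun i _ => measurableSet_Ico.prod measurableSet_Ico).symm
      _ ≤ correlationIntegral ν r := by
          refine measure_mono (iUnion₂_subset fun i _ p ⟨⟨hp1, hp1'⟩, ⟨hp2, hp2'⟩⟩ => ?_)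
          simp only [f, Nat.cast_add, Nat.cast_one] at hp1 hp1' hp2 hp2'
          simp only [mem_ofPred_eq, Real.dist_eq, abs_sub_le_iff]
          constructor <;> nlinarith
  calc ν univ ^ 2 ≤ (∑ i ∈ Finset.range n, ν (I i)) ^ 2 := by gcongr
    _ ≤ n * ∑ i ∈ Finset.range n, ν (I i) ^ 2 := by
        simpa using ENNReal.sq_sum_le_card_mul_sum_sq (Finset.range n) fun i => ν (I i)
    _ ≤ n * correlationIntegral ν r := by gcongr

theorem ofReal_le_correlationIntegral_restrict_ball_sdiff_ball (ν : Measure ℝ) [SFinite ν]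
    {c r ρ : ℝ} {m : ℕ} (hc : 0 ≤ c) (hr : 0 < r) (hm : 0 < m)
    (hlow : ENNReal.ofReal (c * √(m * r)) ≤ ν (ball 0 (m * r)))
    (hupp : ν (ball 0 ρ) ≤ ENNReal.ofReal (c / 2 * √(m * r))) :
    ENNReal.ofReal (c ^ 2 / 8 * r) ≤
      correlationIntegral (ν.restrict (ball 0 (m * r) \ ball 0 ρ)) r := by
  set R := (m : ℝ) * r
  set A := ball (0 : ℝ) R \ ball 0 ρ
  set a := ENNReal.ofReal (c / 2 * √R)
  have hA : a ≤ ν A := by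
    refine ENNReal.le_of_add_le_add_right (a := a) ENNReal.ofReal_ne_top ?_
    calc a + a = ENNReal.ofReal (c * √R) := by
          rw [← ENNReal.ofReal_add (by positivity) (by positivity)]; ring_nf
      _ ≤ ν (ball 0 R) := hlow
      _ ≤ ν A + ν (ball 0 ρ) :=
          (measure_mono (subset_sdiff_union _ _)).trans (measure_union_le _ _)
      _ ≤ ν A + a := by gcongr
  have hsq : ν A ^ 2 ≤ (2 * m : ℕ) * correlationIntegral (ν.restrict A) r := by
    have hsub : A ⊆ Ico (-R) (-R + (2 * m : ℕ) * r) := fun x hx => by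
      obtain ⟨h1, h2⟩ := abs_lt.1 (mem_ball_zero_iff.1 hx.1)
      push_cast
      constructor <;> linarith
    refine restrict_apply_univ A ▸
      sq_measure_univ_le_mul_correlationIntegral (ν.restrict A) (a := -R) hr (2 * m) ?_
    rw [Measure.restrict_apply measurableSet_Ico.compl]
    exact measure_mono_null (fun x hx => hx.1 (hsub hx.2)) measure_empty
  have ha : a ^ 2 = (2 * m : ℕ) * ENNReal.ofReal (c ^ 2 / 8 * r) := by
    rw [← ENNReal.ofReal_natCast, ← ENNReal.ofReal_mul (by positivity),
      ← ENNReal.ofReal_pow (by positivity), mul_pow, Real.sq_sqrt (by positivity)]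
    congr 1
    push_cast
    ring
  rw [← ENNReal.mul_le_mul_iff_right (a := ((2 * m : ℕ) : ℝ≥0∞)) (by positivity)
    (ENNReal.natCast_ne_top _), ← ha]
  exact (pow_le_pow_left₀ zero_le hA 2).trans hsq

theorem exists_mul_ofReal_le_correlationIntegral (ν : Measure ℝ) [SFinite ν] {c C : ℝ}
    (hc : 0 < c)
    (hlow : ∀ ρ, 0 < ρ → ρ < 1 → ENNReal.ofReal (c * √ρ) ≤ ν (ball 0 ρ))
    (hupp : ∀ ρ, 0 < ρ → ρ < 1 → ν (ball 0 ρ) ≤ ENNReal.ofReal (C * √ρ)) (N : ℕ) :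
    ∃ r > 0, N * ENNReal.ofReal (c ^ 2 / 8 * r) ≤ correlationIntegral ν r := by
  -- `√Λ ≥ 2C/c` makes the upper bound at `ρ_k` at most half the lower bound at `ρ_{k+1}`.
  set Λ : ℕ := ⌈(2 * C / c) ^ 2⌉₊ + 1
  have hΛ : 0 < Λ := Nat.succ_pos _
  have hCΛ : C ≤ c / 2 * √Λ := by
    have : 2 * C / c ≤ √Λ := calc
      2 * C / c ≤ √((2 * C / c) ^ 2) := Real.sqrt_sq_eq_abs _ ▸ le_abs_self _
      _ ≤ √Λ := Real.sqrt_le_sqrt ((Nat.le_ceil _).trans (by simp [Λ]))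
    rw [div_le_iff₀ hc] at this
    linarith
  set r : ℝ := (2 * Λ ^ N)⁻¹
  have hr : 0 < r := by positivity
  set ρ : ℕ → ℝ := fun k => (Λ ^ k : ℕ) * r
  have hρ : Monotone ρ := fun i j hij => by simp only [ρ]; gcongr
  have hρ_pos : ∀ k, 0 < ρ k := fun k => by positivity
  have hρ_lt : ∀ k ≤ N, ρ k < 1 := fun k hk => by
    have : ρ N = 1 / 2 := by simp only [ρ, r]; push_cast; field_simp
    linarith [hρ hk]
  have hannulus : ∀ k < N, ENNReal.ofReal (c ^ 2 / 8 * r) ≤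
      correlationIntegral (ν.restrict (ball 0 (ρ (k + 1)) \ ball 0 (ρ k))) r := fun k hk => by
    refine ofReal_le_correlationIntegral_restrict_ball_sdiff_ball ν hc.le hr (pow_pos hΛ _)
      (hlow _ (hρ_pos _) (hρ_lt _ hk)) ((hupp _ (hρ_pos _) (hρ_lt _ hk.le)).trans ?_)
    have hρ_succ : ρ (k + 1) = Λ * ρ k := by simp only [ρ]; push_cast; ring
    refine ENNReal.ofReal_le_ofReal ?_
    calc C * √(ρ k) ≤ c / 2 * √Λ * √(ρ k) :=
          mul_le_mul_of_nonneg_right hCΛ (Real.sqrt_nonneg _)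
      _ = c / 2 * √(ρ (k + 1)) := by
          rw [hρ_succ, Real.sqrt_mul (Nat.cast_nonneg Λ) (ρ k), mul_assoc]
  refine ⟨r, hr, ?_⟩
  calc N * ENNReal.ofReal (c ^ 2 / 8 * r)
      = ∑ k ∈ Finset.range N, ENNReal.ofReal (c ^ 2 / 8 * r) := by simp
    _ ≤ ∑ k ∈ Finset.range N,
          correlationIntegral (ν.restrict (ball 0 (ρ (k + 1)) \ ball 0 (ρ k))) r :=
        Finset.sum_le_sum fun k hk => hannulus k (Finset.mem_range.1 hk)
    _ ≤ correlationIntegral ν r :=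
        sum_correlationIntegral_restrict_le ν r
          (fun _ => measurableSet_ball.diff measurableSet_ball)
          (pairwise_disjoint_ball_sdiff_ball 0 hρ) _

theorem exists_ofReal_mul_lt_correlationIntegral (ν : Measure ℝ) [SFinite ν] {c C : ℝ}
    (hc : 0 < c)
    (hlow : ∀ ρ, 0 < ρ → ρ < 1 → ENNReal.ofReal (c * √ρ) ≤ ν (ball 0 ρ))
    (hupp : ∀ ρ, 0 < ρ → ρ < 1 → ν (ball 0 ρ) ≤ ENNReal.ofReal (C * √ρ)) (B : ℝ) :
    ∃ r > 0, ENNReal.ofReal (B * r) < correlationIntegral ν r := by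
  set N : ℕ := ⌊8 * B / c ^ 2⌋₊ + 1
  obtain ⟨r, hr, h⟩ := exists_mul_ofReal_le_correlationIntegral ν hc hlow hupp N
  refine ⟨r, hr, lt_of_lt_of_le ?_ h⟩
  rw [← ENNReal.ofReal_natCast, ← ENNReal.ofReal_mul (by positivity),
    ENNReal.ofReal_lt_ofReal_iff (by positivity)]
  have hN : 8 * B / c ^ 2 < N := by simpa [N] using Nat.lt_floor_add_one (8 * B / c ^ 2)
  rw [div_lt_iff₀ (by positivity)] at hN
  nlinarith

theorem no_half_regularity_of_conv_sq_bounded_general (μ : Measure ℝ)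
    [IsProbabilityMeasure μ]
    (M : ℝ)
    (hbd : ∀ A : Set ℝ, MeasurableSet A →
      Measure.map (fun p : ℝ × ℝ => p.1 + p.2) (μ.prod μ) A ≤
        ENNReal.ofReal M * volume A) :
    ∀ K : Set ℝ, IsCompact K → μ Kᶜ = 0 →
      ¬ ∃ C : ℝ, 1 ≤ C ∧ ∀ x ∈ K, ∀ r : ℝ, 0 < r → r < 1 →
        ENNReal.ofReal (C⁻¹ * r ^ (1/2 : ℝ)) ≤ μ (ball x r) ∧
        μ (ball x r) ≤ ENNReal.ofReal (C * r ^ (1/2 : ℝ)) := by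
  rintro K - hμK ⟨C, hC, hreg⟩
  have hK : ∀ᵐ x ∂μ, x ∈ K := ae_iff.2 hμK
  obtain ⟨r, hr, hlower⟩ := exists_ofReal_mul_lt_correlationIntegral (μ ∗ μ.neg) (C := C)
    (inv_pos.2 (by linarith))
    (fun ρ h0 h1 => le_conv_neg_apply_ball_zero μ <| hK.mono fun x hx => by
      simpa only [Real.sqrt_eq_rpow] using (hreg x hx ρ h0 h1).1)
    (fun ρ h0 h1 => conv_neg_apply_ball_zero_le μ <| hK.mono fun x hx => by
      simpa only [Real.sqrt_eq_rpow] using (hreg x hx ρ h0 h1).2)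
    (2 * M)
  have hupper : correlationIntegral (μ ∗ μ) r ≤ ENNReal.ofReal M * ENNReal.ofReal (2 * r) := by
    simpa only [measure_univ, mul_one] using
      correlationIntegral_le_of_measure_closedBall_le (μ ∗ μ) fun x =>
      (hbd _ measurableSet_closedBall).trans_eq (by rw [Real.volume_closedBall])
  rw [correlationIntegral_conv_self, ← ENNReal.ofReal_mul' (by positivity)] at hupper
  exact (hlower.trans_le hupper).ne (by ring_nf)

/-- If `μ` is a compactly supported probability measure on `ℝ` whose convolution
square has a bounded density, then `μ` cannot be Ahlfors regular of degree `1/2`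
on a compact carrier. -/
theorem no_half_regularity_of_conv_sq_bounded (μ : Measure ℝ)
    [IsProbabilityMeasure μ] (K₀ : Set ℝ) (hK₀ : IsCompact K₀) (hμK₀ : μ K₀ᶜ = 0)
    (M : ℝ)
    (hbd : ∀ A : Set ℝ, MeasurableSet A →
      Measure.map (fun p : ℝ × ℝ => p.1 + p.2) (μ.prod μ) A ≤
        ENNReal.ofReal M * volume A) :
    ∀ K : Set ℝ, IsCompact K → μ Kᶜ = 0 →
      ¬ ∃ C : ℝ, 1 ≤ C ∧ ∀ x ∈ K, ∀ r : ℝ, 0 < r → r < 1 →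
        ENNReal.ofReal (C⁻¹ * r ^ (1/2 : ℝ)) ≤ μ (ball x r) ∧
        μ (ball x r) ≤ ENNReal.ofReal (C * r ^ (1/2 : ℝ)) :=
  no_half_regularity_of_conv_sq_bounded_general μ M hbd
end
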